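/- Let G ⊆ ℝⁿ be a measurable set, T > 0, and let F : (0,T) × G → [0,∞) be a measurable function. For 0 < ε < 1/3 set r = 4/3 − ε and ρ = (8 − 6ε)/(2 + 3ε). Then the mixed-norm estimate ‖F‖_{L_{4/3}(0,T; L_r(G))} ≤ ‖F^{1/2}‖_{L_4(0,T; L_2(G))} · ‖F^{1/2}‖_{L_2(0,T; L_ρ(G))} holds; explicitly, ( ∫₀ᵀ ( ∫_G F(t,x)^r dx )^{4/(3r)} dt )^{3/4} ≤ ( ∫₀ᵀ ( ∫_G F(t,x) dx )² dt )^{1/4} · ( ∫₀ᵀ ( ∫_G F(t,x)^{ρ/2} dx )^{2/ρ} dt )^{1/2}, whenever the right-hand side is finite. -/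

import Mathlib

/-!
Write `F = F^{1/2} · F^{1/2}`. The estimate is then Hölder's inequality for mixed norms,
`‖fg‖_{L_p(L_s)} ≤ ‖f‖_{L_{p₁}(L_{s₁})} ‖g‖_{L_{p₂}(L_{s₂})}`, with the time exponents
`3/4 = 1/4 + 1/2` and the space exponents `1/r = 1/2 + 1/ρ`. The mixed inequality follows from the
generalized Hölder inequality applied first in `x` for each fixed `t`, then in `t`.
-/

open MeasureTheory
open scoped ENNReal

section MixedNorm

variable {α β : Type*} [MeasurableSpace α] [MeasurableSpace β]

/-- The mixed norm `‖h‖_{L_p(ν; L_s(μ))}`, the `t`-variable being integrated against `ν`. -/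
noncomputable def mixedLpNorm (h : β → α → ℝ≥0∞) (p s : ℝ) (ν : Measure β) (μ : Measure α) :
    ℝ≥0∞ :=
  eLpNorm' (fun t => eLpNorm' (h t) s μ) p ν

theorem eLpNorm'_ennreal_eq_lintegral (f : α → ℝ≥0∞) (p : ℝ) (μ : Measure α) :
    eLpNorm' f p μ = (∫⁻ x, f x ^ p ∂μ) ^ (1 / p) := by
  simp only [eLpNorm', enorm_eq_self]

theorem mixedLpNorm_eq_lintegral (h : β → α → ℝ≥0∞) (p s : ℝ) (ν : Measure β) (μ : Measure α) :
    mixedLpNorm h p s ν μ = (∫⁻ t, (∫⁻ x, h t x ^ s ∂μ) ^ (p / s) ∂ν) ^ (1 / p) := by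
  simp only [mixedLpNorm, eLpNorm'_ennreal_eq_lintegral, ← ENNReal.rpow_mul, one_div_mul_eq_div]

theorem measurable_eLpNorm'_of_measurable_uncurry {μ : Measure α} [SFinite μ] {h : β → α → ℝ≥0∞}
    (hh : Measurable (Function.uncurry h)) (s : ℝ) :
    Measurable fun t => eLpNorm' (h t) s μ := by
  simp only [eLpNorm'_ennreal_eq_lintegral]
  exact (Measurable.lintegral_prod_right (f := fun t x => h t x ^ s) (hh.pow_const s)).pow_const _

theorem mixedLpNorm_mul_le {ν : Measure β} {μ : Measure α} [SFinite μ] {f g : β → α → ℝ≥0∞}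
    (hf : Measurable (Function.uncurry f)) (hg : Measurable (Function.uncurry g))
    {p p₁ p₂ s s₁ s₂ : ℝ} (hp : 0 < p) (hpp₁ : p < p₁) (hp₁₂ : 1 / p = 1 / p₁ + 1 / p₂)
    (hs : 0 < s) (hss₁ : s < s₁) (hs₁₂ : 1 / s = 1 / s₁ + 1 / s₂) :
    mixedLpNorm (f * g) p s ν μ ≤ mixedLpNorm f p₁ s₁ ν μ * mixedLpNorm g p₂ s₂ ν μ := by
  have inner (t : β) : eLpNorm' ((f * g) t) s μ ≤ eLpNorm' (f t) s₁ μ * eLpNorm' (g t) s₂ μ := by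
    simp only [eLpNorm'_ennreal_eq_lintegral]
    exact ENNReal.lintegral_Lp_mul_le_Lq_mul_Lr hs hss₁ hs₁₂ μ
      (hf.comp measurable_prodMk_left).aemeasurable (hg.comp measurable_prodMk_left).aemeasurable
  calc mixedLpNorm (f * g) p s ν μ
      ≤ eLpNorm' (fun t => eLpNorm' (f t) s₁ μ * eLpNorm' (g t) s₂ μ) p ν := by
        simp only [mixedLpNorm, eLpNorm'_ennreal_eq_lintegral]
        gcongr with t
        exact inner t
    _ ≤ mixedLpNorm f p₁ s₁ ν μ * mixedLpNorm g p₂ s₂ ν μ := by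
        simp only [mixedLpNorm, eLpNorm'_ennreal_eq_lintegral _ p]
        exact ENNReal.lintegral_Lp_mul_le_Lq_mul_Lr hp hpp₁ hp₁₂ ν
          (measurable_eLpNorm'_of_measurable_uncurry hf s₁).aemeasurable
          (measurable_eLpNorm'_of_measurable_uncurry hg s₂).aemeasurable

end MixedNorm

theorem time_space_holder_interpolation_general
    (n : ℕ) (G : Set (EuclideanSpace ℝ (Fin n)))
    (T : ℝ)
    (F : ℝ → EuclideanSpace ℝ (Fin n) → ℝ)
    (hFmeas : Measurable (Function.uncurry F))
    (ε : ℝ) (hε0 : 0 < ε) (hε : ε < 1/3)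
    (r ρ : ℝ) (hr : r = 4/3 - ε) (hρ : ρ = (8 - 6*ε)/(2 + 3*ε)) :
    (∫⁻ t in Set.Ioo 0 T,
        (∫⁻ x in G, ENNReal.ofReal (F t x) ^ r) ^ (4/(3*r))) ^ ((3:ℝ)/4) ≤
      (∫⁻ t in Set.Ioo 0 T,
          (∫⁻ x in G, ENNReal.ofReal (F t x)) ^ (2:ℝ)) ^ ((1:ℝ)/4) *
        (∫⁻ t in Set.Ioo 0 T,
            (∫⁻ x in G, ENNReal.ofReal (F t x) ^ (ρ/2)) ^ (2/ρ)) ^ ((1:ℝ)/2) := by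
  set Φ : ℝ → EuclideanSpace ℝ (Fin n) → ℝ≥0∞ := fun t x => ENNReal.ofReal (F t x) ^ (1 / 2 : ℝ)
  have hΦ : Measurable (Function.uncurry Φ) := hFmeas.ennreal_ofReal.pow_const _
  have hΦ_pow (t x) (a : ℝ) : Φ t x ^ a = ENNReal.ofReal (F t x) ^ (a / 2) := by
    rw [← ENNReal.rpow_mul, one_div_mul_eq_div]
  have hΦ_mul : Φ * Φ = fun t x => ENNReal.ofReal (F t x) := by
    ext t x
    rw [Pi.mul_apply, Pi.mul_apply, ← ENNReal.rpow_add_of_nonneg _ _ (by norm_num) (by norm_num)]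
    norm_num
  have hrρ : 1 / r = 1 / 2 + 1 / ρ := by
    have h8 : (8 : ℝ) - 6 * ε ≠ 0 := by linarith
    rw [hr, hρ, one_div_div, div_add_div _ _ two_ne_zero h8,
      div_eq_div_iff (by linarith) (mul_ne_zero two_ne_zero h8)]
    ring
  have holder := mixedLpNorm_mul_le (ν := volume.restrict (Set.Ioo 0 T))
    (μ := volume.restrict G) hΦ hΦ (p := 4 / 3) (p₁ := 4) (p₂ := 2) (s := r) (s₁ := 2) (s₂ := ρ)
    (by norm_num) (by norm_num) (by norm_num) (by linarith) (by linarith) hrρ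
  simp only [hΦ_mul, mixedLpNorm_eq_lintegral, hΦ_pow] at holder
  norm_num [div_div] at holder ⊢
  exact holder

/-- Time-space Hölder-type interpolation: for a nonnegative measurable
`F : (0,T) × G → [0,∞)` and `0 < ε < 1/3`, with `r = 4/3 − ε` and
`ρ = (8 − 6ε)/(2 + 3ε)`, one has
`‖F‖_{L_{4/3}(0,T;L_r)} ≤ ‖F^{1/2}‖_{L_4(0,T;L_2)} ⬝ ‖F^{1/2}‖_{L_2(0,T;L_ρ)}`.
(The inequality is stated in `[0,∞]`, hence holds in particular whenever the
right-hand side is finite.) -/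
theorem time_space_holder_interpolation
    (n : ℕ) (G : Set (EuclideanSpace ℝ (Fin n))) (hG : MeasurableSet G)
    (T : ℝ) (hT : 0 < T)
    (F : ℝ → EuclideanSpace ℝ (Fin n) → ℝ)
    (hF : ∀ t x, 0 ≤ F t x)
    (hFmeas : Measurable (Function.uncurry F))
    (ε : ℝ) (hε0 : 0 < ε) (hε : ε < 1/3)
    (r ρ : ℝ) (hr : r = 4/3 - ε) (hρ : ρ = (8 - 6*ε)/(2 + 3*ε)) :
    (∫⁻ t in Set.Ioo 0 T,
        (∫⁻ x in G, ENNReal.ofReal (F t x) ^ r) ^ (4/(3*r))) ^ ((3:ℝ)/4) ≤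
      (∫⁻ t in Set.Ioo 0 T,
          (∫⁻ x in G, ENNReal.ofReal (F t x)) ^ (2:ℝ)) ^ ((1:ℝ)/4) *
        (∫⁻ t in Set.Ioo 0 T,
            (∫⁻ x in G, ENNReal.ofReal (F t x) ^ (ρ/2)) ^ (2/ρ)) ^ ((1:ℝ)/2) :=
  time_space_holder_interpolation_general n G T F hFmeas ε hε0 hε r ρ hr hρ
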